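/- arXiv:2107.07179 — 3 statements merged into one kernel-verified Lean document; each statement's English description precedes it below -/
import Mathlib

section
/- Let v_max > 0, a_max > 0, L > 0 with L ≥ v_max² / (2·a_max), and let T ≥ 0. Let v : ℝ → ℝ be continuous on [0, T], differentiable on the open interval (0, T), with v 0 = 0, 0 ≤ v t ≤ v_max for all t ∈ [0, T], and deriv v t ≤ a_max for all t ∈ (0, T). If ∫ t in (0)..(T), v t = L, then T ≥ L / v_max + v_max / (2·a_max). -/
/-!
The acceleration bound and `v 0 = 0` give `v t ≤ a_max * t`, so a vehicle reaches `v_max` no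
earlier than `s = v_max / a_max`. Bounding `v` by `a_max * t` on `[0, s]` and by `v_max` on
`[s, T]` gives `L ≤ a_max s² / 2 + v_max (T - s) = v_max T - v_max² / (2 a_max)`. The same bound
with `s = T` shows that `T < v_max / a_max` would give `L < v_max² / (2 a_max)`, so that split
point is admissible.
-/

open Set MeasureTheory

theorem le_mul_of_deriv_le {f : ℝ → ℝ} {C T : ℝ} (hT : 0 ≤ T) (hf : ContinuousOn f (Icc 0 T))
    (hf' : DifferentiableOn ℝ f (Ioo 0 T)) (hf0 : f 0 = 0) (hC : ∀ t ∈ Ioo 0 T, deriv f t ≤ C) :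
    ∀ t ∈ Icc 0 T, f t ≤ C * t := fun t ht => by
  simpa [hf0] using (convex_Icc 0 T).image_sub_le_mul_sub_of_deriv_le hf
    (by rwa [interior_Icc]) (by rwa [interior_Icc]) 0 (left_mem_Icc.2 hT) t ht ht.1

theorem mul_sq_div_two_lt_of_mul_lt {a v T : ℝ} (ha : 0 < a) (hT : 0 ≤ T) (haT : a * T < v) :
    a * T ^ 2 / 2 < v ^ 2 / (2 * a) := by
  rw [lt_div_iff₀ (by positivity)]
  nlinarith [mul_pos (sub_pos.2 haT) (by linarith [mul_nonneg ha.le hT] : 0 < v + a * T)]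

theorem integral_le_of_le_mul_of_le {f : ℝ → ℝ} {a M s T : ℝ}
    (hf : IntervalIntegrable f volume 0 T) (hs : 0 ≤ s) (hsT : s ≤ T)
    (h_ramp : ∀ t ∈ Icc 0 s, f t ≤ a * t) (h_max : ∀ t ∈ Icc s T, f t ≤ M) :
    ∫ t in (0 : ℝ)..T, f t ≤ a * s ^ 2 / 2 + M * (T - s) := by
  have hf₁ : IntervalIntegrable f volume 0 s :=
    hf.mono_set (by rw [uIcc_of_le hs, uIcc_of_le (hs.trans hsT)]; exact Icc_subset_Icc le_rfl hsT)
  have hf₂ : IntervalIntegrable f volume s T :=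
    hf.mono_set (by rw [uIcc_of_le hsT, uIcc_of_le (hs.trans hsT)]; exact Icc_subset_Icc hs le_rfl)
  have h_ramp_int : ∫ t in (0 : ℝ)..s, f t ≤ a * s ^ 2 / 2 := calc
    ∫ t in (0 : ℝ)..s, f t ≤ ∫ t in (0 : ℝ)..s, a * t :=
      intervalIntegral.integral_mono_on hs hf₁ ((continuous_const_mul a).intervalIntegrable 0 s) h_ramp
    _ = a * s ^ 2 / 2 := by
      rw [intervalIntegral.integral_const_mul, integral_id]; ring
  have h_max_int : ∫ t in s..T, f t ≤ M * (T - s) := calc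
    ∫ t in s..T, f t ≤ ∫ _ in s..T, M :=
      intervalIntegral.integral_mono_on hsT hf₂ intervalIntegrable_const h_max
    _ = M * (T - s) := by simp [mul_comm]
  rw [← intervalIntegral.integral_add_adjacent_intervals hf₁ hf₂]
  exact add_le_add h_ramp_int h_max_int

theorem traversal_time_lower_bound_general (v_max a_max L T : ℝ)
    (hv : 0 < v_max) (ha : 0 < a_max)
    (hLge : L ≥ v_max ^ 2 / (2 * a_max)) (hT : 0 ≤ T)
    (v : ℝ → ℝ)
    (hcont : ContinuousOn v (Set.Icc 0 T))
    (hdiff : DifferentiableOn ℝ v (Set.Ioo 0 T))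
    (hv0 : v 0 = 0)
    (hbound : ∀ t ∈ Set.Icc (0 : ℝ) T, 0 ≤ v t ∧ v t ≤ v_max)
    (hderiv : ∀ t ∈ Set.Ioo (0 : ℝ) T, deriv v t ≤ a_max)
    (hint : ∫ t in (0 : ℝ)..T, v t = L) :
    T ≥ L / v_max + v_max / (2 * a_max) := by
  have hv_int : IntervalIntegrable v volume 0 T := hcont.intervalIntegrable_of_Icc hT
  have h_ramp := le_mul_of_deriv_le hT hcont hdiff hv0 hderiv
  have h_max : ∀ t ∈ Icc 0 T, v t ≤ v_max := fun t ht => (hbound t ht).2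
  have hsT : v_max / a_max ≤ T := by
    by_contra! hTs
    have hL := integral_le_of_le_mul_of_le hv_int hT le_rfl h_ramp
      fun t ht => h_max t ⟨hT.trans ht.1, ht.2⟩
    rw [hint, sub_self, mul_zero, add_zero] at hL
    linarith [mul_sq_div_two_lt_of_mul_lt ha hT ((lt_div_iff₀' ha).1 hTs)]
  have hL := integral_le_of_le_mul_of_le hv_int (by positivity) hsT
    (fun t ht => h_ramp t ⟨ht.1, ht.2.trans hsT⟩)
    (fun t ht => h_max t ⟨(div_pos hv ha).le.trans ht.1, ht.2⟩)
  rw [hint] at hL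
  rw [ge_iff_le, ← le_sub_iff_add_le, div_le_iff₀ hv]
  have : a_max * (v_max / a_max) ^ 2 / 2 + v_max * (T - v_max / a_max)
      = (T - v_max / (2 * a_max)) * v_max := by
    field_simp; ring
  linarith

theorem traversal_time_lower_bound (v_max a_max L T : ℝ)
    (hv : 0 < v_max) (ha : 0 < a_max) (hL : 0 < L)
    (hLge : L ≥ v_max ^ 2 / (2 * a_max)) (hT : 0 ≤ T)
    (v : ℝ → ℝ)
    (hcont : ContinuousOn v (Set.Icc 0 T))
    (hdiff : DifferentiableOn ℝ v (Set.Ioo 0 T))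
    (hv0 : v 0 = 0)
    (hbound : ∀ t ∈ Set.Icc (0 : ℝ) T, 0 ≤ v t ∧ v t ≤ v_max)
    (hderiv : ∀ t ∈ Set.Ioo (0 : ℝ) T, deriv v t ≤ a_max)
    (hint : ∫ t in (0 : ℝ)..T, v t = L) :
    T ≥ L / v_max + v_max / (2 * a_max) :=
  traversal_time_lower_bound_general v_max a_max L T hv ha hLge hT v hcont hdiff hv0 hbound hderiv
    hint
end

section
/- Let v_max > 0, a_max > 0 and L ≥ v_max² / (2·a_max), and set T* = L / v_max + v_max / (2·a_max). Define v : ℝ → ℝ by v t = min (a_max · t) v_max. Then v is continuous, v 0 = 0, 0 ≤ v t ≤ v_max for all t ∈ [0, T*], v is Lipschitz with constant a_max, and ∫ t in (0)..(T*), v t = L. Hence the lower bound T* on the traversal time of the control zone is attained. -/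
/-!
The velocity profile `min (a t) c` ramps up until `t₁ = c / a` and then cruises at `c`.
Over `[0, T]` with `t₁ ≤ T` it therefore covers `c T` minus the triangle `c t₁ / 2 = c² / (2a)`
lost during the ramp. For `T = L / c + c / (2a)` this is exactly `L`, and the hypothesis
`L ≥ c² / (2a)` is precisely `t₁ ≤ T`.
-/

open intervalIntegral

lemma lipschitzWith_min_mul_const {a : ℝ} (ha : 0 ≤ a) (c : ℝ) :
    LipschitzWith (Real.toNNReal a) fun t : ℝ => min (a * t) c := by
  have hnorm : ‖a‖₊ = Real.toNNReal a := by
    rw [Real.toNNReal_of_nonneg ha]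
    exact Real.nnnorm_of_nonneg ha
  simpa only [hnorm, smul_eq_mul] using (lipschitzWith_smul (β := ℝ) a).min_const c

lemma integral_min_mul_const {a c T : ℝ} (ha : 0 < a) (hT : c / a ≤ T) (hc : 0 ≤ c) :
    ∫ t in (0 : ℝ)..T, min (a * t) c = c * T - c ^ 2 / (2 * a) := by
  have hcont : Continuous fun t : ℝ => min (a * t) c := by fun_prop
  have ht₁ : 0 ≤ c / a := div_nonneg hc ha.le
  have hramp : ∫ t in (0 : ℝ)..c / a, min (a * t) c = ∫ t in (0 : ℝ)..c / a, a * t := by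
    refine integral_congr fun t ht => min_eq_left ?_
    rw [Set.uIcc_of_le ht₁] at ht
    exact (le_div_iff₀' ha).mp ht.2
  have hcruise : ∫ t in c / a..T, min (a * t) c = ∫ _ in c / a..T, c := by
    refine integral_congr fun t ht => min_eq_right ?_
    rw [Set.uIcc_of_le hT] at ht
    exact (div_le_iff₀' ha).mp ht.1
  rw [← integral_add_adjacent_intervals (hcont.intervalIntegrable 0 (c / a))
    (hcont.intervalIntegrable (c / a) T), hramp, hcruise, integral_const_mul, integral_id,
    integral_const, smul_eq_mul]
  field_simp
  ring

theorem traversal_time_lower_bound_attained (v_max a_max L : ℝ)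
    (hv : 0 < v_max) (ha : 0 < a_max)
    (hL : L ≥ v_max ^ 2 / (2 * a_max)) :
    Continuous (fun t : ℝ => min (a_max * t) v_max) ∧
    min (a_max * 0) v_max = 0 ∧
    (∀ t ∈ Set.Icc (0 : ℝ) (L / v_max + v_max / (2 * a_max)),
      0 ≤ min (a_max * t) v_max ∧ min (a_max * t) v_max ≤ v_max) ∧
    LipschitzWith (Real.toNNReal a_max) (fun t : ℝ => min (a_max * t) v_max) ∧
    ∫ t in (0 : ℝ)..(L / v_max + v_max / (2 * a_max)), min (a_max * t) v_max = L := by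
  have hramp_time : v_max / a_max ≤ L / v_max + v_max / (2 * a_max) := by
    have hL' : v_max / (2 * a_max) ≤ L / v_max := by
      rw [le_div_iff₀ hv]
      calc v_max / (2 * a_max) * v_max = v_max ^ 2 / (2 * a_max) := by ring
        _ ≤ L := hL
    calc v_max / a_max = v_max / (2 * a_max) + v_max / (2 * a_max) := by field_simp; ring
      _ ≤ _ := by gcongr
  refine ⟨by fun_prop, by simp [hv.le], fun t ht => ⟨?_, min_le_right _ _⟩,
    lipschitzWith_min_mul_const ha.le v_max, ?_⟩
  · exact le_min (mul_nonneg ha.le ht.1) hv.le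
  · rw [integral_min_mul_const ha hramp_time hv.le]
    field_simp
    ring
end

section
/- Let N be a natural number and let E_u, E_b : Fin (N+1) → Fin (N+1) → Prop be two edge relations (unidirectional and bidirectional conflicts) such that E_u i j or E_b i j implies i < j. Let d : Fin (N+1) → ℕ satisfy d 0 = 0 and, for every j ≠ 0, d j = sInf {m : ℕ | (∀ i, E_u i j → d i < m) ∧ (∀ i, E_b i j → d i ≠ m)}. Then (a) for every j ≠ 0 the defining set is nonempty, so d j is well defined and attains its constraints; (b) E_u i j implies d i < d j; and (c) E_b i j implies d i ≠ d j. Consequently any two distinct vertices with equal depth are joined by neither an E_u edge nor an E_b edge, i.e., the iDFST layering is conflict-free. -/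
/-!
Every vertex sees only finitely many parents, so a depth beyond all parents' depths is admissible and
the infimum defining `d j` is attained: `d j` itself satisfies the constraints imposed by each parent.
Edges only point to larger indices, so the head of an edge is never the virtual leader `0` and is
covered by this.
-/

section AdmissibleDepths

variable {ι : Type*}

/-- The depths iDFST may give a vertex with unidirectional parents `U` and bidirectional parents `B`. -/
def admissibleDepths (U B : ι → Prop) (d : ι → ℕ) : Set ℕ :=
  {m | (∀ i, U i → d i < m) ∧ (∀ i, B i → d i ≠ m)}

theorem admissibleDepths_nonempty [Finite ι] (U B : ι → Prop) (d : ι → ℕ) :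
    (admissibleDepths U B d).Nonempty := by
  obtain ⟨M, hM⟩ := (Set.finite_range d).bddAbove
  have hlt : ∀ i, d i < M + 1 := fun i => Nat.lt_succ_of_le (hM ⟨i, rfl⟩)
  exact ⟨M + 1, fun i _ => hlt i, fun i _ => (hlt i).ne⟩

end AdmissibleDepths

theorem iDFST_correctness_general (N : ℕ) (Eu Eb : Fin (N+1) → Fin (N+1) → Prop)
    (hlt : ∀ i j : Fin (N+1), Eu i j ∨ Eb i j → i < j)
    (d : Fin (N+1) → ℕ)
    (hd : ∀ j : Fin (N+1), j ≠ 0 →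
      d j = sInf {m : ℕ | (∀ i : Fin (N+1), Eu i j → d i < m) ∧
                          (∀ i : Fin (N+1), Eb i j → d i ≠ m)}) :
    (∀ j : Fin (N+1), j ≠ 0 →
      {m : ℕ | (∀ i : Fin (N+1), Eu i j → d i < m) ∧
               (∀ i : Fin (N+1), Eb i j → d i ≠ m)}.Nonempty) ∧
    (∀ i j : Fin (N+1), Eu i j → d i < d j) ∧
    (∀ i j : Fin (N+1), Eb i j → d i ≠ d j) ∧
    (∀ i j : Fin (N+1), i ≠ j → d i = d j → ¬ Eu i j ∧ ¬ Eb i j) := by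
  have hmem : ∀ i j, Eu i j ∨ Eb i j → d j ∈ admissibleDepths (Eu · j) (Eb · j) d := by
    intro i j hij
    rw [hd j (Fin.ne_zero_of_lt (hlt i j hij))]
    exact Nat.sInf_mem (admissibleDepths_nonempty _ _ d)
  have hu : ∀ i j, Eu i j → d i < d j := fun i j h => (hmem i j (.inl h)).1 i h
  have hb : ∀ i j, Eb i j → d i ≠ d j := fun i j h => (hmem i j (.inr h)).2 i h
  exact ⟨fun j _ => admissibleDepths_nonempty _ _ d, hu, hb,
    fun i j _ hdij => ⟨fun h => (hu i j h).ne hdij, fun h => hb i j h hdij⟩⟩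

theorem iDFST_correctness (N : ℕ) (Eu Eb : Fin (N+1) → Fin (N+1) → Prop)
    (hlt : ∀ i j : Fin (N+1), Eu i j ∨ Eb i j → i < j)
    (d : Fin (N+1) → ℕ) (hd0 : d 0 = 0)
    (hd : ∀ j : Fin (N+1), j ≠ 0 →
      d j = sInf {m : ℕ | (∀ i : Fin (N+1), Eu i j → d i < m) ∧
                          (∀ i : Fin (N+1), Eb i j → d i ≠ m)}) :
    (∀ j : Fin (N+1), j ≠ 0 →
      {m : ℕ | (∀ i : Fin (N+1), Eu i j → d i < m) ∧
               (∀ i : Fin (N+1), Eb i j → d i ≠ m)}.Nonempty) ∧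
    (∀ i j : Fin (N+1), Eu i j → d i < d j) ∧
    (∀ i j : Fin (N+1), Eb i j → d i ≠ d j) ∧
    (∀ i j : Fin (N+1), i ≠ j → d i = d j → ¬ Eu i j ∧ ¬ Eb i j) :=
  iDFST_correctness_general N Eu Eb hlt d hd
end
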